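/- For a Boolean function f on F_2^n with maximum autocorrelation Δ_f = max_{y≠0} |Σ_{x} (-1)^{f(x)+f(x+y)}|, and for P_u defined as the probability that f(u_1)+f(u_2)+f(u_3)+f(u_4)=0 given u_1+u_2+u_3+u_4 = u (with u_1,u_2,u_3 uniform), one has min_{u ≠ 0} (P_0 − P_u) ≥ (1/2^{n+1})·(1 − Δ_f/2^n)^2. -/

import Mathlib

open Finset

/-- Inner product over F_2. -/
def ip {n : ℕ} (x y : Fin n → ZMod 2) : ZMod 2 := ∑ i, x i * y i

/-- (-1)^s for s ∈ F_2, as a rational number. -/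
def sgn (s : ZMod 2) : ℚ := (-1) ^ s.val

/-- Walsh transform of f at y. -/
def walsh {n : ℕ} (f : (Fin n → ZMod 2) → ZMod 2) (y : Fin n → ZMod 2) : ℚ :=
  ∑ z, sgn (f z + ip z y)

/-- Autocorrelation coefficient of f at y. -/
def acorr {n : ℕ} (f : (Fin n → ZMod 2) → ZMod 2) (y : Fin n → ZMod 2) : ℚ :=
  ∑ x, sgn (f x + f (x + y))

/-- P_u : probability that f(u₁)+f(u₂)+f(u₃)+f(u₄)=0 when u₁+u₂+u₃+u₄ = u,
with (u₁,u₂,u₃) uniform in (F_2^n)^3 and u₄ = u + u₁ + u₂ + u₃. -/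
def probP {n : ℕ} (f : (Fin n → ZMod 2) → ZMod 2) (u : Fin n → ZMod 2) : ℚ :=
  ((univ.filter (fun t : (Fin n → ZMod 2) × (Fin n → ZMod 2) × (Fin n → ZMod 2) =>
      f t.1 + f t.2.1 + f t.2.2 + f (t.1 + t.2.1 + t.2.2 + u) = 0)).card : ℚ) / 2 ^ (3 * n)

/-- f is balanced: it takes the value 0 on exactly 2^(n-1) inputs. -/
def IsBalancedBF {n : ℕ} (f : (Fin n → ZMod 2) → ZMod 2) : Prop :=
  (univ.filter (fun x : Fin n → ZMod 2 => f x = 0)).card = 2 ^ (n - 1)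

/-!
Writing `(-1)^{f(u₁)+f(u₂)+f(u₃)+f(u₄)}` and substituting `a = u₁ + u₂` turns the character sum
behind `P_u` into the correlation `∑ₐ r(a) r(a + u)` of the autocorrelation spectrum `r`, so
`P_0 - P_u` is proportional to `∑ₐ r(a)² - ∑ₐ r(a) r(a + u) = ½ ∑ₐ (r(a) - r(a + u))²`.
The two terms `a = 0` and `a = u` of the last sum already give `(r(0) - r(u))² ≥ (2ⁿ - Δ)²`,
since `r(0) = 2ⁿ` and `r(u) ≤ Δ`.
-/

section Correlation

variable {G R : Type*} [AddCommGroup G] [Fintype G]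
  [Field R] [LinearOrder R] [IsStrictOrderedRing R]

theorem sum_mul_self_sub_sum_mul_add_eq (r : G → R) (u : G) :
    ∑ a, r a * r a - ∑ a, r a * r (a + u) = (∑ a, (r a - r (a + u)) ^ 2) / 2 := by
  have hshift : ∑ a, r (a + u) ^ 2 = ∑ a, r a ^ 2 :=
    Fintype.sum_equiv (Equiv.addRight u) _ _ fun _ => rfl
  have hexpand : ∑ a, (r a - r (a + u)) ^ 2
      = ∑ a, r a ^ 2 - 2 * ∑ a, r a * r (a + u) + ∑ a, r (a + u) ^ 2 := by
    rw [Finset.mul_sum, ← Finset.sum_sub_distrib, ← Finset.sum_add_distrib]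
    exact Finset.sum_congr rfl fun a _ => by ring
  simp only [hexpand, hshift, ← sq]
  ring

theorem sq_sub_le_sum_mul_self_sub_sum_mul_add (r : G → R) (hr : ∀ a, r (-a) = r a)
    {u : G} (hu : u ≠ 0) :
    (r 0 - r u) ^ 2 ≤ ∑ a, r a * r a - ∑ a, r a * r (a + u) := by
  classical
  have hpair : ∑ a ∈ {0, -u}, (r a - r (a + u)) ^ 2 = 2 * (r 0 - r u) ^ 2 := by
    rw [Finset.sum_pair (by simpa [eq_comm] using hu), zero_add, neg_add_cancel, hr]
    ring
  have hle : ∑ a ∈ {0, -u}, (r a - r (a + u)) ^ 2 ≤ ∑ a, (r a - r (a + u)) ^ 2 :=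
    Finset.sum_le_sum_of_subset_of_nonneg (Finset.subset_univ _) fun a _ _ => sq_nonneg _
  rw [sum_mul_self_sub_sum_mul_add_eq]
  linarith

end Correlation

theorem ZMod.two_eq_zero_or_one (a : ZMod 2) : a = 0 ∨ a = 1 := by
  revert a
  decide

theorem sgn_zero : sgn 0 = 1 := rfl

theorem sgn_one : sgn 1 = -1 := rfl

theorem sgn_add (a b : ZMod 2) : sgn (a + b) = sgn a * sgn b := by
  rcases a.two_eq_zero_or_one with rfl | rfl <;> rcases b.two_eq_zero_or_one with rfl | rfl <;>
    simp [sgn_zero, sgn_one, CharTwo.add_self_eq_zero]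

theorem sgn_eq_ite (a : ZMod 2) : sgn a = 2 * (if a = 0 then 1 else 0) - 1 := by
  rcases a.two_eq_zero_or_one with rfl | rfl <;> norm_num [sgn_zero, sgn_one]

theorem abs_sgn (a : ZMod 2) : |sgn a| = 1 := by
  rcases a.two_eq_zero_or_one with rfl | rfl <;> norm_num [sgn_zero, sgn_one]

theorem card_filter_eq_zero_eq {α : Type*} [Fintype α] (g : α → ZMod 2) :
    ((univ.filter fun x => g x = 0).card : ℚ) = (Fintype.card α + ∑ x, sgn (g x)) / 2 := by
  simp only [sgn_eq_ite, Finset.sum_sub_distrib, ← Finset.mul_sum, Finset.sum_boole,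
    Finset.sum_const, Finset.card_univ, nsmul_eq_mul, mul_one]
  ring

section Autocorrelation

variable {n : ℕ} (f : (Fin n → ZMod 2) → ZMod 2)

theorem acorr_zero : acorr f 0 = 2 ^ n := by
  simp [acorr, ZModModule.add_self, sgn]

theorem abs_acorr_le (y : Fin n → ZMod 2) : |acorr f y| ≤ 2 ^ n :=
  calc |acorr f y| ≤ ∑ x, |sgn (f x + f (x + y))| := Finset.abs_sum_le_sum_abs _ _
    _ = 2 ^ n := by simp [abs_sgn]

theorem acorr_neg (y : Fin n → ZMod 2) : acorr f (-y) = acorr f y := by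
  rw [ZModModule.neg_eq_self]

theorem sum_sgn_quadruple_eq_sum_acorr_mul (u : Fin n → ZMod 2) :
    ∑ t : (Fin n → ZMod 2) × (Fin n → ZMod 2) × (Fin n → ZMod 2),
        sgn (f t.1 + f t.2.1 + f t.2.2 + f (t.1 + t.2.1 + t.2.2 + u))
      = ∑ a, acorr f a * acorr f (a + u) := by
  have hterm : ∀ a x z : Fin n → ZMod 2,
      sgn (f x + f (x + a)) * sgn (f z + f (z + (a + u)))
        = sgn (f x + f (x + a) + f z + f (x + (x + a) + z + u)) := by
    intro a x z
    rw [show x + (x + a) + z + u = z + (a + u) + (x + x) by abel, ZModModule.add_self, add_zero]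
    simp only [sgn_add]
    ring
  simp only [Fintype.sum_prod_type]
  calc ∑ x, ∑ y, ∑ z, sgn (f x + f y + f z + f (x + y + z + u))
      = ∑ x, ∑ a, ∑ z, sgn (f x + f (x + a) + f z + f (x + (x + a) + z + u)) :=
        Finset.sum_congr rfl fun x _ =>
          (Fintype.sum_equiv (Equiv.addLeft x) _ _ fun _ => rfl).symm
    _ = ∑ a, ∑ x, ∑ z, sgn (f x + f (x + a) + f z + f (x + (x + a) + z + u)) :=
        Finset.sum_comm
    _ = ∑ a, acorr f a * acorr f (a + u) := by
        simp only [acorr, Finset.sum_mul_sum, hterm]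

theorem probP_eq_sum_acorr_mul (u : Fin n → ZMod 2) :
    probP f u = 1 / 2 + (∑ a, acorr f a * acorr f (a + u)) / 2 ^ (3 * n + 1) := by
  rw [probP, card_filter_eq_zero_eq, sum_sgn_quadruple_eq_sum_acorr_mul]
  simp only [Fintype.card_prod, Fintype.card_pi, ZMod.card, Finset.prod_const, Finset.card_univ,
    Fintype.card_fin]
  push_cast
  rw [pow_succ]
  field_simp
  ring

end Autocorrelation

theorem probP_gap_lower_bound {n : ℕ} (f : (Fin n → ZMod 2) → ZMod 2)
    (Δ : ℚ) (hΔ : IsGreatest {a : ℚ | ∃ y : Fin n → ZMod 2, y ≠ 0 ∧ a = |acorr f y|} Δ) :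
    ∀ u : Fin n → ZMod 2, u ≠ 0 →
      probP f 0 - probP f u ≥ (1 / 2 ^ (n + 1)) * (1 - Δ / 2 ^ n) ^ 2 := by
  intro u hu
  have hΔ_le : Δ ≤ 2 ^ n := by
    obtain ⟨y, -, rfl⟩ := hΔ.1
    exact abs_acorr_le f y
  have hu_le : acorr f u ≤ Δ := (le_abs_self _).trans (hΔ.2 ⟨u, hu, rfl⟩)
  have hcorr := sq_sub_le_sum_mul_self_sub_sum_mul_add (acorr f) (acorr_neg f) hu
  rw [acorr_zero] at hcorr
  have hsq : (2 ^ n - Δ) ^ 2 ≤ (2 ^ n - acorr f u) ^ 2 :=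
    pow_le_pow_left₀ (by linarith) (by linarith) 2
  have hrhs : (1 / 2 ^ (n + 1)) * (1 - Δ / 2 ^ n) ^ 2 = (2 ^ n - Δ) ^ 2 / 2 ^ (3 * n + 1) := by
    field_simp
    ring
  simp only [probP_eq_sum_acorr_mul, add_zero, hrhs]
  rw [ge_iff_le, add_sub_add_left_eq_sub, ← sub_div]
  gcongr
  exact hsq.trans hcorr
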